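/- There is no pair of continuous functions x₁, x₂ : [1,5] → ℝ such that for every ξ ∈ [1,5] there exist y₁(ξ), y₂(ξ) ∈ {0,1} making (x₁(ξ), x₂(ξ), y₁(ξ), y₂(ξ)) feasible for the system y₁ ≤ x₁ ≤ 3y₁, 3y₂ ≤ x₂ ≤ 5y₂, x₁ + x₂ = ξ, y₁ + y₂ ≤ 1. -/
import Mathlib


/-- Feasibility for the illustrative mixed-integer system. -/
def Feas (ξ x1 x2 y1 y2 : ℝ) : Prop :=
  y1 ≤ x1 ∧ x1 ≤ 3 * y1 ∧ 3 * y2 ≤ x2 ∧ x2 ≤ 5 * y2 ∧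
  x1 + x2 = ξ ∧ y1 + y2 ≤ 1 ∧ (y1 = 0 ∨ y1 = 1) ∧ (y2 = 0 ∨ y2 = 1)

lemma feas_cases {ξ x1 x2 y1 y2 : ℝ} (h : Feas ξ x1 x2 y1 y2) :
    x2 = 0 ∨ (x2 = ξ ∧ 3 ≤ ξ) := by
  obtain ⟨h1, h2, h3, h4, h5, h6, hy1, hy2⟩ := h
  rcases hy2 with rfl | rfl
  · left; linarith
  · right
    rcases hy1 with rfl | rfl
    · constructor <;> linarith
    · linarith

/-- No continuous decision rules for the continuous recourse variables can be
feasible for all `ξ ∈ [1,5]`. -/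
theorem no_continuous_decision_rule :
    ¬ ∃ x1 x2 : ℝ → ℝ, ContinuousOn x1 (Set.Icc 1 5) ∧
      ContinuousOn x2 (Set.Icc 1 5) ∧
      ∀ ξ ∈ Set.Icc (1 : ℝ) 5, ∃ y1 y2 : ℝ, Feas ξ (x1 ξ) (x2 ξ) y1 y2 := by
  rintro ⟨x1, x2, hc1, hc2, hfeas⟩
  have h2 : x2 2 = 0 := by
    obtain ⟨y1, y2, h⟩ := hfeas 2 (by constructor <;> norm_num)
    rcases feas_cases h with h | ⟨h, h3⟩
    · exact h
    · linarith
  have h4 : x2 4 = 4 := by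
    obtain ⟨y1, y2, hf⟩ := hfeas 4 (by constructor <;> norm_num)
    rcases feas_cases hf with h | ⟨h, h3⟩
    · exfalso
      obtain ⟨h1', h2', _, _, h5', _, hy1, _⟩ := hf
      rcases hy1 with rfl | rfl <;> linarith
    · exact h
  have hsub : Set.Icc (2:ℝ) 4 ⊆ Set.Icc 1 5 := Set.Icc_subset_Icc (by norm_num) (by norm_num)
  have hivt := intermediate_value_Icc (by norm_num : (2:ℝ) ≤ 4) (hc2.mono hsub)
  have h1mem : (1:ℝ) ∈ Set.Icc (x2 2) (x2 4) := by rw [h2, h4]; constructor <;> norm_num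
  obtain ⟨c, hc, hcx⟩ := hivt h1mem
  obtain ⟨y1, y2, h⟩ := hfeas c (hsub hc)
  rcases feas_cases h with h | ⟨h, h3⟩
  · rw [hcx] at h; norm_num at h
  · rw [hcx] at h; have := hc.1; linarith
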